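/- For n = 2 and θ₀ = θ₁ = π/3, the 4×4 quantum transition probability matrix P^q, regarded as a real matrix indexed by pairs of bits via the identification of 2-bit strings (j₁, j₀) with pairs, is not a Kronecker product: there exist no 2×2 real matrices M and N such that P^q_{(i₁,i₀),(j₁,j₀)} = M_{i₁,j₁} · N_{i₀,j₀} for all bits i₁,i₀,j₁,j₀. -/

import Mathlib

/-!
In a Kronecker product `M ⊗ N` the row of index `(0, 0)`, read as a `2 × 2` matrix in `(j₁, j₀)`,
is the rank-one matrix `M 0 ⬝ (N 0)ᵀ`, so its `2 × 2` minor vanishes. For `θ = π/3` the entries of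
that row are products of `cos² (π/6) = 3/4` and `sin² (π/6) = 1/4`, and the minor is
`(9/16)(3/16) - (1/16)(3/16) ≠ 0`.
-/

/-- The bit `I_{ℓ-1}` of an `n`-bit string, with the convention `I_{-1} = 0`. -/
def prevBit (n : ℕ) (I : Fin n → ZMod 2) (ℓ : Fin n) : ZMod 2 :=
  if 0 < (ℓ : ℕ) then I ⟨(ℓ : ℕ) - 1, lt_of_le_of_lt (Nat.sub_le _ _) ℓ.isLt⟩ else 0

/-- Quantum random-walk kernel, with the convention `I_{-1} = 0`. -/
noncomputable def fq (n : ℕ) (θ : Fin n → ℝ) (I : Fin n → ZMod 2) : ℝ :=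
  ∏ ℓ : Fin n,
    if I ℓ + prevBit n I ℓ = 0 then Real.cos (θ ℓ / 2) ^ 2 else Real.sin (θ ℓ / 2) ^ 2

/-- Quantum transition probability matrix. -/
noncomputable def Pq (n : ℕ) (θ : Fin n → ℝ) :
    Matrix (Fin n → ZMod 2) (Fin n → ZMod 2) ℝ :=
  Matrix.of fun J' J => fq n θ (J' + J)

open Real

lemma fq_two (θ : Fin 2 → ℝ) (a b : ZMod 2) :
    fq 2 θ ![a, b] =
      (if a = 0 then cos (θ 0 / 2) ^ 2 else sin (θ 0 / 2) ^ 2) *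
        (if b + a = 0 then cos (θ 1 / 2) ^ 2 else sin (θ 1 / 2) ^ 2) := by
  simp [fq, prevBit, Fin.prod_univ_two]

lemma fq_two_pi_div_three (a b : ZMod 2) :
    fq 2 ![π / 3, π / 3] ![a, b] =
      (if a = 0 then 3 / 4 else 1 / 4) * (if b + a = 0 then 3 / 4 else 1 / 4) := by
  have hθ : π / 3 / 2 = π / 6 := by ring
  have sq_sin_pi_div_six : sin (π / 6) ^ 2 = 1 / 4 := by norm_num [sin_pi_div_six]
  simp only [fq_two, Matrix.cons_val_zero, Matrix.cons_val_one, hθ, sq_cos_pi_div_six,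
    sq_sin_pi_div_six]

theorem stmt_15 :
    ¬ ∃ M N : Matrix (ZMod 2) (ZMod 2) ℝ,
        ∀ i₁ i₀ j₁ j₀ : ZMod 2,
          Pq 2 ![Real.pi / 3, Real.pi / 3] ![i₀, i₁] ![j₀, j₁] =
            M i₁ j₁ * N i₀ j₀ := by
  rintro ⟨M, N, h⟩
  have minor :
      Pq 2 ![π / 3, π / 3] ![0, 0] ![0, 0] * Pq 2 ![π / 3, π / 3] ![0, 0] ![1, 1] =
        Pq 2 ![π / 3, π / 3] ![0, 0] ![1, 0] * Pq 2 ![π / 3, π / 3] ![0, 0] ![0, 1] := by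
    simp only [h]
    ring
  simp only [Pq, Matrix.of_apply, Matrix.cons_add_cons, Matrix.empty_add_empty, zero_add,
    fq_two_pi_div_three, show (1 + 1 : ZMod 2) = 0 from rfl] at minor
  norm_num at minor
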